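/- In the Eisenberg–Noe setting (α_x = α_L = 1), each component of the greatest clearing payment map x ↦ p_i(x) is a concave function on ℝⁿ₊, and consequently each component of the greatest clearing wealth map x ↦ V_i(x) = x_i + (Πᵀ p(x))_i − p̄_i is concave on ℝⁿ₊. -/

import Mathlib

open Matrix BigOperators

noncomputable section

/-- Total liabilities `p̄_i = Σ_{j=1}^{n+1} L_{ij}`. -/
def pbar {n : ℕ} (L : Matrix (Fin n) (Fin (n + 1)) ℝ) (i : Fin n) : ℝ :=
  ∑ j, L i j

/-- Relative liabilities `π_{ij} = L_{ij} / p̄_i` if `p̄_i > 0`, else `0`. -/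
def relLiab {n : ℕ} (L : Matrix (Fin n) (Fin (n + 1)) ℝ) (i j : Fin n) : ℝ :=
  if 0 < pbar L i then L i j.castSucc / pbar L i else 0

/-- `p` is the greatest clearing payment vector for endowments `x` in the Eisenberg–Noe
setting: the greatest fixed point of `p ↦ p̄ ∧ (x + Πᵀ p)` on `[0, p̄]`. -/
def IsGreatestClearingPayment {n : ℕ} (L : Matrix (Fin n) (Fin (n + 1)) ℝ)
    (x p : Fin n → ℝ) : Prop :=
  IsGreatest {q : Fin n → ℝ | (∀ i, 0 ≤ q i ∧ q i ≤ pbar L i) ∧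
    ∀ i, q i = min (pbar L i) (x i + ∑ j, relLiab L j i * q j)} p

/-! The map `x ↦ p(x)` dominates convex combinations because `(x, q) ↦ p̄ ∧ (x + Πᵀ q)` is
jointly concave and monotone in `q`: a convex combination of clearing payments is then a
post-fixed point for the combined endowment, and by the Knaster–Tarski argument every
post-fixed point lies below the greatest fixed point. Concavity of `V` follows since `V` is
affine in `x` plus a nonnegative combination of the concave maps `x ↦ p_j(x)`. -/

theorem ConcaveOn.fun_sum {𝕜 E β ι : Type*} [Semiring 𝕜] [PartialOrder 𝕜]
    [AddCommMonoid E] [AddCommMonoid β] [PartialOrder β] [IsOrderedAddMonoid β]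
    [SMul 𝕜 E] [Module 𝕜 β] {s : Set E} (hs : Convex 𝕜 s) {t : Finset ι}
    {f : ι → E → β} (hf : ∀ j ∈ t, ConcaveOn 𝕜 s (f j)) :
    ConcaveOn 𝕜 s (fun x => ∑ j ∈ t, f j x) := by
  rw [← Finset.sum_fn]
  exact Finset.sum_induction f (ConcaveOn 𝕜 s) (fun _ _ => ConcaveOn.add)
    (concaveOn_const (0 : β) hs) hf

theorem Monotone.exists_fixedPoint_ge {α : Type*} [ConditionallyCompleteLattice α]
    {f : α → α} (hf : Monotone f) (hbdd : BddAbove {w | w ≤ f w}) {q : α} (hq : q ≤ f q) :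
    ∃ r, f r = r ∧ q ≤ r := by
  have hle : sSup {w | w ≤ f w} ≤ f (sSup {w | w ≤ f w}) :=
    csSup_le ⟨q, hq⟩ fun w hw => hw.trans (hf (le_csSup hbdd hw))
  exact ⟨_, le_antisymm (le_csSup hbdd (hf hle)) hle, le_csSup hbdd hq⟩

theorem min_convex_combination_le {R : Type*} [Semiring R] [LinearOrder R] [IsOrderedRing R]
    {a b c u v : R} (ha : 0 ≤ a) (hb : 0 ≤ b)
    (hab : a + b = 1) : a * min c u + b * min c v ≤ min c (a * u + b * v) := by
  calc a * min c u + b * min c v = min (a * c) (a * u) + min (b * c) (b * v) := by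
        rw [mul_min_of_nonneg _ _ ha, mul_min_of_nonneg _ _ hb]
    _ ≤ min (a * c + b * c) (a * u + b * v) := min_add_min_le_min_add_add
    _ = min c (a * u + b * v) := by rw [← add_mul, hab, one_mul]

section ClearingMap

variable {n : ℕ} (L : Matrix (Fin n) (Fin (n + 1)) ℝ)

theorem relLiab_nonneg (hL : ∀ i j, 0 ≤ L i j) (i j : Fin n) : 0 ≤ relLiab L i j := by
  unfold relLiab
  split_ifs with h
  · exact div_nonneg (hL i j.castSucc) h.le
  · exact le_rfl

def clearingMap (x q : Fin n → ℝ) : Fin n → ℝ :=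
  fun i => min (pbar L i) (x i + ∑ j, relLiab L j i * q j)

theorem clearingMap_le_pbar (x q : Fin n → ℝ) : clearingMap L x q ≤ pbar L :=
  fun _ => min_le_left _ _

theorem clearingMap_monotone (hL : ∀ i j, 0 ≤ L i j) (x : Fin n → ℝ) :
    Monotone (clearingMap L x) := fun _ _ hpq i =>
  min_le_min le_rfl (add_le_add_right (Finset.sum_le_sum fun j _ =>
    mul_le_mul_of_nonneg_left (hpq j) (relLiab_nonneg L hL j i)) _)

theorem clearingMap_convex_combination_le {x y p q : Fin n → ℝ} {a b : ℝ} (ha : 0 ≤ a)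
    (hb : 0 ≤ b) (hab : a + b = 1) :
    a • clearingMap L x p + b • clearingMap L y q
      ≤ clearingMap L (a • x + b • y) (a • p + b • q) := by
  intro i
  have hsum : ∑ j, relLiab L j i * (a • p + b • q) j
      = a * ∑ j, relLiab L j i * p j + b * ∑ j, relLiab L j i * q j := by
    simp only [Finset.mul_sum, ← Finset.sum_add_distrib, Pi.add_apply, Pi.smul_apply,
      smul_eq_mul]
    exact Finset.sum_congr rfl fun j _ => by ring
  simp only [clearingMap, Pi.add_apply, Pi.smul_apply, smul_eq_mul] at hsum ⊢
  rw [hsum]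
  exact (min_convex_combination_le ha hb hab).trans_eq (congrArg (min _) (by ring))

end ClearingMap

namespace IsGreatestClearingPayment

variable {n : ℕ} {L : Matrix (Fin n) (Fin (n + 1)) ℝ} {x p : Fin n → ℝ}

theorem nonneg (hp : IsGreatestClearingPayment L x p) : 0 ≤ p := fun i => (hp.1.1 i).1

theorem clearingMap_eq (hp : IsGreatestClearingPayment L x p) : clearingMap L x p = p :=
  funext fun i => (hp.1.2 i).symm

theorem le_of_le_clearingMap (hL : ∀ i j, 0 ≤ L i j) (hp : IsGreatestClearingPayment L x p)
    {q : Fin n → ℝ} (hq0 : 0 ≤ q) (hq : q ≤ clearingMap L x q) : q ≤ p := by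
  obtain ⟨r, hr, hqr⟩ := (clearingMap_monotone L hL x).exists_fixedPoint_ge
    ⟨pbar L, fun w hw => hw.trans (clearingMap_le_pbar L x w)⟩ hq
  refine hqr.trans (hp.2 ⟨fun i => ⟨(hq0 i).trans (hqr i), ?_⟩, fun i => (congrFun hr i).symm⟩)
  exact hr ▸ clearingMap_le_pbar L x r i

theorem convex_combination_le (hL : ∀ i j, 0 ≤ L i j) {y q r : Fin n → ℝ} {a b : ℝ}
    (hp : IsGreatestClearingPayment L x p) (hq : IsGreatestClearingPayment L y q)
    (hr : IsGreatestClearingPayment L (a • x + b • y) r) (ha : 0 ≤ a) (hb : 0 ≤ b)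
    (hab : a + b = 1) : a • p + b • q ≤ r := by
  refine hr.le_of_le_clearingMap hL
    (add_nonneg (smul_nonneg ha hp.nonneg) (smul_nonneg hb hq.nonneg)) ?_
  calc a • p + b • q = a • clearingMap L x p + b • clearingMap L y q := by
        rw [hp.clearingMap_eq, hq.clearingMap_eq]
    _ ≤ _ := clearingMap_convex_combination_le L ha hb hab

end IsGreatestClearingPayment

theorem clearing_payment_concave_general (n : ℕ)
    (L : Matrix (Fin n) (Fin (n + 1)) ℝ)
    (hL : ∀ i j, 0 ≤ L i j)
    (P : (Fin n → ℝ) → (Fin n → ℝ))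
    (hP : ∀ x : Fin n → ℝ, (∀ i, 0 ≤ x i) → IsGreatestClearingPayment L x (P x)) :
    ∀ i : Fin n,
      ConcaveOn ℝ {x : Fin n → ℝ | ∀ j, 0 ≤ x j} (fun x => P x i)
      ∧ ConcaveOn ℝ {x : Fin n → ℝ | ∀ j, 0 ≤ x j}
          (fun x => x i + (∑ j, relLiab L j i * P x j) - pbar L i) := by
  have hconvex : Convex ℝ {x : Fin n → ℝ | ∀ j, 0 ≤ x j} := convex_Ici 0
  have hpayment : ∀ i, ConcaveOn ℝ {x : Fin n → ℝ | ∀ j, 0 ≤ x j} (fun x => P x i) :=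
    fun i => ⟨hconvex, fun x hx y hy a b ha hb hab =>
      (hP x hx).convex_combination_le hL (hP y hy) (hP _ (hconvex hx hy ha hb hab)) ha hb hab i⟩
  intro i
  refine ⟨hpayment i, ?_⟩
  have hwealth : ConcaveOn ℝ {x : Fin n → ℝ | ∀ j, 0 ≤ x j}
      (fun x => x i + ∑ j, relLiab L j i * P x j) :=
    ((LinearMap.proj i).concaveOn hconvex).add
      (ConcaveOn.fun_sum hconvex fun j _ => (hpayment j).smul (relLiab_nonneg L hL j i))
  exact hwealth.sub (convexOn_const (pbar L i) hconvex)

/-- In the Eisenberg–Noe setting (`α_x = α_L = 1`), each component of the greatest clearing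
payment map `x ↦ p_i(x)` is concave on `ℝⁿ₊`, and consequently each component of the greatest
clearing wealth map `x ↦ V_i(x) = x_i + (Πᵀ p(x))_i − p̄_i` is concave on `ℝⁿ₊`. -/
theorem clearing_payment_concave (n : ℕ) (hn : 1 ≤ n)
    (L : Matrix (Fin n) (Fin (n + 1)) ℝ)
    (hL : ∀ i j, 0 ≤ L i j) (hLdiag : ∀ i : Fin n, L i i.castSucc = 0)
    (P : (Fin n → ℝ) → (Fin n → ℝ))
    (hP : ∀ x : Fin n → ℝ, (∀ i, 0 ≤ x i) → IsGreatestClearingPayment L x (P x)) :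
    ∀ i : Fin n,
      ConcaveOn ℝ {x : Fin n → ℝ | ∀ j, 0 ≤ x j} (fun x => P x i)
      ∧ ConcaveOn ℝ {x : Fin n → ℝ | ∀ j, 0 ≤ x j}
          (fun x => x i + (∑ j, relLiab L j i * P x j) - pbar L i) :=
  clearing_payment_concave_general n L hL P hP
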